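/- (Gambler's ruin expected duration) For the symmetric ±1 random walk started at a with 0 < a < b and τ = inf{ i : X_i = 0 or X_i = b }, the expected stopping time satisfies E[τ] = a(b − a). -/

import Mathlib

/-!
Both `X n` and `X n ^ 2 - n` are martingales for the natural filtration of the steps, hence so
is `b X n - (X n ^ 2 - n) = X n (b - X n) + n`. Optional stopping at the truncated exit times
`min τ n`, whose stopped values are dominated by `b ^ 2 + τ`, followed by dominated convergence,
gives `E[X τ (b - X τ) + τ] = a (b - a)`, and the first term vanishes because `X τ ∈ {0, b}`.
That the walk exits at all follows in the same way from `X n ^ 2 - n` alone, which gives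
`E[min τ n] ≤ b ^ 2`.
-/

open MeasureTheory ProbabilityTheory Finset

open Filter Topology

section

variable {Ω : Type*} {m0 : MeasurableSpace Ω} {μ : Measure Ω}

lemma memLp_of_ae_eq_one_or_neg_one [IsFiniteMeasure μ] {Y : Ω → ℝ}
    (hY : AEStronglyMeasurable Y μ) (hval : ∀ᵐ ω ∂μ, Y ω = 1 ∨ Y ω = -1) (p : ENNReal) :
    MemLp Y p μ :=
  MemLp.of_bound hY 1 <| by filter_upwards [hval] with ω h; rcases h with h | h <;> simp [h]

lemma integral_eq_zero_of_fair_sign [IsFiniteMeasure μ] {Y : Ω → ℝ} (hY : Measurable Y)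
    (hval : ∀ᵐ ω ∂μ, Y ω = 1 ∨ Y ω = -1)
    (hp1 : μ {ω | Y ω = 1} = 1 / 2) (hpm1 : μ {ω | Y ω = -1} = 1 / 2) :
    μ[Y] = 0 := by
  have h1 : MeasurableSet {ω | Y ω = 1} := hY (measurableSet_singleton 1)
  have hm1 : MeasurableSet {ω | Y ω = -1} := hY (measurableSet_singleton (-1))
  have hY_eq : Y =ᵐ[μ]
      {ω | Y ω = 1}.indicator (fun _ => 1) + {ω | Y ω = -1}.indicator (fun _ => -1) := by
    filter_upwards [hval] with ω hω
    rcases hω with h | h <;> norm_num [Set.indicator_apply, h]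
  rw [integral_congr_ae hY_eq, integral_add' ((integrable_const _).indicator h1)
    ((integrable_const _).indicator hm1), integral_indicator h1, integral_indicator hm1]
  simp [measureReal_def, hp1, hpm1]

lemma norm_mul_sub_add_le {x b k t : ℝ} (hx : x ∈ Set.Icc 0 b) (hk : 0 ≤ k) (hkt : k ≤ t) :
    ‖x * (b - x) + k‖ ≤ b ^ 2 + t := by
  obtain ⟨h0, hb⟩ := hx
  rw [Real.norm_eq_abs, abs_le]
  constructor <;> nlinarith

section Hitting

variable {β : Type*} {u : ℕ → Ω → β} {s : Set β} {ω : Ω} {n : ℕ}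

lemma hittingBtwn_zero_eq_sInf (h : ∃ j, u j ω ∈ s) (hn : sInf {i | u i ω ∈ s} ≤ n) :
    hittingBtwn u s 0 n ω = sInf {i | u i ω ∈ s} :=
  le_antisymm (hittingBtwn_le_of_mem (Nat.zero_le _) hn (Nat.sInf_mem h))
    (Nat.sInf_le (hittingBtwn_mem_set ⟨_, ⟨Nat.zero_le _, hn⟩, Nat.sInf_mem h⟩))

lemma hittingBtwn_zero_le_sInf (h : ∃ j, u j ω ∈ s) :
    hittingBtwn u s 0 n ω ≤ sInf {i | u i ω ∈ s} := by
  rcases le_or_gt (sInf {i | u i ω ∈ s}) n with hn | hn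
  · exact (hittingBtwn_zero_eq_sInf h hn).le
  · exact (hittingBtwn_le ω).trans hn.le

lemma tendsto_apply_hittingBtwn {α : Type*} [TopologicalSpace α] (f : ℕ → Ω → α)
    (h : ∃ j, u j ω ∈ s) :
    Tendsto (fun n => f (hittingBtwn u s 0 n ω) ω) atTop (𝓝 (f (sInf {i | u i ω ∈ s}) ω)) :=
  tendsto_atTop_of_eventually_const fun n hn => by rw [hittingBtwn_zero_eq_sInf h hn]

lemma hittingBtwn_zero_of_forall_notMem (h : ∀ j, u j ω ∉ s) : hittingBtwn u s 0 n ω = n := by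
  simp [hittingBtwn, h]

theorem MeasureTheory.Martingale.integral_hittingBtwn_eq [IsFiniteMeasure μ] [MeasurableSpace β]
    {𝒢 : Filtration ℕ m0} {f : ℕ → Ω → ℝ} (hf : Martingale f 𝒢 μ) (hu : Adapted 𝒢 u)
    (hs : MeasurableSet s) (n : ℕ) :
    ∫ ω, f (hittingBtwn u s 0 n ω) ω ∂μ = ∫ ω, f 0 ω ∂μ := by
  have hτ := hu.isStoppingTime_hittingBtwn (n := 0) (n' := n) hs
  have h0 : IsStoppingTime 𝒢 (fun _ => (0 : WithTop ℕ)) := isStoppingTime_const 𝒢 0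
  have hle : (fun _ => (0 : WithTop ℕ)) ≤ fun ω => ((hittingBtwn u s 0 n ω : ℕ) : WithTop ℕ) :=
    fun _ => zero_le
  have hbdd : ∀ ω, ((hittingBtwn u s 0 n ω : ℕ) : WithTop ℕ) ≤ n := fun ω =>
    mod_cast hittingBtwn_le ω
  have h := hf.submartingale.expected_stoppedValue_mono h0 hτ hle hbdd
  have h' := hf.neg.submartingale.expected_stoppedValue_mono h0 hτ hle hbdd
  simp only [stoppedValue, Pi.neg_apply, integral_neg, WithTop.untopD_zero, WithTop.untopD_coe,
    neg_le_neg_iff] at h h'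
  exact le_antisymm h' h

lemma integrable_apply_hittingBtwn [IsFiniteMeasure μ] [MeasurableSpace β]
    {𝒢 : Filtration ℕ m0} {f : ℕ → Ω → ℝ} (hf : ∀ k, Integrable (f k) μ) (hu : Adapted 𝒢 u)
    (hs : MeasurableSet s) (n : ℕ) :
    Integrable (fun ω => f (hittingBtwn u s 0 n ω) ω) μ :=
  integrable_stoppedValue ℕ (hu.isStoppingTime_hittingBtwn hs) hf
    (fun ω => mod_cast hittingBtwn_le (n := 0) (m := n) ω)

lemma ae_exists_mem_of_integral_hittingBtwn_le [IsFiniteMeasure μ] {C : ℝ}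
    (hint : ∀ n, Integrable (fun ω => ((hittingBtwn u s 0 n ω : ℕ) : ℝ)) μ)
    (hC : ∀ n, ∫ ω, ((hittingBtwn u s 0 n ω : ℕ) : ℝ) ∂μ ≤ C) :
    ∀ᵐ ω ∂μ, ∃ j, u j ω ∈ s := by
  set N := {ω | ∀ j, u j ω ∉ s}
  have hN : ∀ n : ℕ, n * μ.real N ≤ C := fun n => calc
    n * μ.real N ≤ n * μ.real {ω | (n : ℝ) ≤ ((hittingBtwn u s 0 n ω : ℕ) : ℝ)} := by
        refine mul_le_mul_of_nonneg_left (measureReal_mono fun ω hω => ?_) n.cast_nonneg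
        simp [hittingBtwn_zero_of_forall_notMem hω]
    _ ≤ ∫ ω, ((hittingBtwn u s 0 n ω : ℕ) : ℝ) ∂μ :=
        mul_meas_ge_le_integral_of_nonneg (ae_of_all _ fun ω => by positivity) (hint n) n
    _ ≤ C := hC n
  have hN0 : μ.real N = 0 := by
    by_contra hne
    obtain ⟨n, hn⟩ := exists_nat_gt (C / μ.real N)
    rw [div_lt_iff₀ (measureReal_nonneg.lt_of_ne' hne)] at hn
    linarith [hN n]
  rw [ae_iff]
  simpa [N, measureReal_eq_zero_iff] using hN0

theorem MeasureTheory.Martingale.integral_sInf_eq [IsFiniteMeasure μ] [MeasurableSpace β]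
    {𝒢 : Filtration ℕ m0} {f : ℕ → Ω → ℝ} (hf : Martingale f 𝒢 μ) (hu : Adapted 𝒢 u)
    (hs : MeasurableSet s) (hhit : ∀ᵐ ω ∂μ, ∃ j, u j ω ∈ s) {G : Ω → ℝ} (hG : Integrable G μ)
    (hbound : ∀ n, ∀ᵐ ω ∂μ, ‖f (hittingBtwn u s 0 n ω) ω‖ ≤ G ω) :
    ∫ ω, f (sInf {i | u i ω ∈ s}) ω ∂μ = ∫ ω, f 0 ω ∂μ := by
  refine tendsto_nhds_unique (tendsto_integral_of_dominated_convergence G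
    (fun n => (integrable_apply_hittingBtwn hf.integrable hu hs n).aestronglyMeasurable) hG hbound
    ?_) (by simp only [hf.integral_hittingBtwn_eq hu hs, tendsto_const_nhds])
  filter_upwards [hhit] with ω h
  exact tendsto_apply_hittingBtwn f h

lemma integrable_sInf_of_lintegral_lt_top [IsFiniteMeasure μ] [MeasurableSpace β]
    {𝒢 : Filtration ℕ m0} (hu : Adapted 𝒢 u) (hs : MeasurableSet s)
    (hhit : ∀ᵐ ω ∂μ, ∃ j, u j ω ∈ s)
    (hfin : ∫⁻ ω, ((sInf {i | u i ω ∈ s} : ℕ) : ENNReal) ∂μ < ⊤) :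
    Integrable (fun ω => ((sInf {i | u i ω ∈ s} : ℕ) : ℝ)) μ := by
  refine ⟨aestronglyMeasurable_of_tendsto_ae atTop (fun n => (integrable_apply_hittingBtwn
    (fun k => integrable_const (μ := μ) (k : ℝ)) hu hs n).aestronglyMeasurable) ?_, ?_⟩
  · filter_upwards [hhit] with ω h
    exact tendsto_apply_hittingBtwn (fun k _ => (k : ℝ)) h
  · simpa [HasFiniteIntegral] using hfin

-- Integrality is what keeps the path from jumping over an endpoint.
lemma apply_hittingBtwn_mem_Icc {x : ℕ → Ω → ℝ} {b : ℤ}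
    (h0 : ∃ k : ℤ, x 0 ω = k ∧ 0 ≤ k ∧ k ≤ b)
    (hstep : ∀ i, x (i + 1) ω = x i ω + 1 ∨ x (i + 1) ω = x i ω - 1) (n : ℕ) :
    x (hittingBtwn x {0, (b : ℝ)} 0 n ω) ω ∈ Set.Icc 0 (b : ℝ) := by
  suffices h : ∀ i ≤ hittingBtwn x {0, (b : ℝ)} 0 n ω, ∃ k : ℤ, x i ω = k ∧ 0 ≤ k ∧ k ≤ b by
    obtain ⟨k, hk, hk0, hkb⟩ := h _ le_rfl
    rw [hk]
    exact ⟨mod_cast hk0, mod_cast hkb⟩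
  intro i hi
  induction i with
  | zero => exact h0
  | succ i ih =>
    obtain ⟨k, hk, hk0, hkb⟩ := ih (by omega)
    have hmem : x i ω ∉ ({0, (b : ℝ)} : Set ℝ) :=
      notMem_of_lt_hittingBtwn (m := n) (by omega) (Nat.zero_le i)
    simp only [Set.mem_insert_iff, Set.mem_singleton_iff, hk, Int.cast_eq_zero,
      Int.cast_inj, not_or] at hmem
    rcases hstep i with h | h <;> rw [h, hk]
    · exact ⟨k + 1, by push_cast; ring, by omega, by omega⟩
    · exact ⟨k - 1, by push_cast; ring, by omega, by omega⟩

end Hitting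

def randomWalk (c : ℝ) (Z : ℕ → Ω → ℝ) (n : ℕ) (ω : Ω) : ℝ :=
  c + ∑ j ∈ Icc 1 n, Z j ω

section RandomWalk

variable {Z : ℕ → Ω → ℝ} {c : ℝ}

@[simp]
lemma randomWalk_zero (ω : Ω) : randomWalk c Z 0 ω = c := by
  simp [randomWalk]

lemma randomWalk_succ (n : ℕ) (ω : Ω) :
    randomWalk c Z (n + 1) ω = randomWalk c Z n ω + Z (n + 1) ω := by
  simp [randomWalk, sum_Icc_succ_top, add_assoc]

lemma ae_randomWalk_hittingBtwn_mem_Icc (hval : ∀ i, ∀ᵐ ω ∂μ, Z i ω = 1 ∨ Z i ω = -1)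
    {a b : ℤ} (ha : 0 ≤ a) (hab : a ≤ b) :
    ∀ᵐ ω ∂μ, ∀ n, randomWalk a Z (hittingBtwn (randomWalk a Z) {0, (b : ℝ)} 0 n ω) ω ∈
      Set.Icc 0 (b : ℝ) := by
  filter_upwards [ae_all_iff.2 hval] with ω hω n
  refine apply_hittingBtwn_mem_Icc ⟨a, by simp, ha, hab⟩ (fun i => ?_) n
  rcases hω (i + 1) with h | h <;> simp [randomWalk_succ, h, sub_eq_add_neg]

variable (hZ : ∀ i, StronglyMeasurable (Z i))

lemma stronglyAdapted_randomWalk (c : ℝ) :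
    StronglyAdapted (Filtration.natural Z hZ) (randomWalk c Z) := fun _ =>
  stronglyMeasurable_const.add <| Finset.stronglyMeasurable_fun_sum _ fun j hj =>
    (Filtration.stronglyAdapted_natural hZ j).mono (Filtration.mono _ (mem_Icc.1 hj).2)

lemma condExp_natural_succ_eq_zero (hindep : iIndepFun Z μ) (hmean : ∀ i, μ[Z i] = 0)
    (n : ℕ) : μ[Z (n + 1) | Filtration.natural Z hZ n] =ᵐ[μ] 0 := by
  simpa [hmean, Pi.zero_def] using hindep.condExp_natural_ae_eq_of_lt hZ (Nat.lt_succ_self n)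

variable [IsProbabilityMeasure μ] (hindep : iIndepFun Z μ) (hmean : ∀ i, μ[Z i] = 0)
include hZ hindep hmean

lemma martingale_randomWalk (hint : ∀ i, Integrable (Z i) μ) (c : ℝ) :
    Martingale (randomWalk c Z) (Filtration.natural Z hZ) μ := by
  have hS_int : ∀ n, Integrable (randomWalk c Z n) μ := fun n =>
    (integrable_const c).add (integrable_finsetSum _ fun j _ => hint j)
  refine martingale_nat (stronglyAdapted_randomWalk hZ c) hS_int fun n => ?_
  have hsucc : randomWalk c Z (n + 1) = randomWalk c Z n + Z (n + 1) :=
    funext (randomWalk_succ n)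
  filter_upwards [hsucc ▸ condExp_add (hS_int n) (hint (n + 1)) (Filtration.natural Z hZ n),
    condExp_natural_succ_eq_zero hZ hindep hmean n] with ω h1 h2
  rw [h1, Pi.add_apply, h2, condExp_of_stronglyMeasurable ((Filtration.natural Z hZ).le n)
    (stronglyAdapted_randomWalk hZ c n) (hS_int n), Pi.zero_apply, add_zero]

variable (hval : ∀ i, ∀ᵐ ω ∂μ, Z i ω = 1 ∨ Z i ω = -1)
include hval

lemma martingale_randomWalk_sq_sub (c : ℝ) :
    Martingale (fun n ω => randomWalk c Z n ω ^ 2 - n) (Filtration.natural Z hZ) μ := by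
  set ℱ := Filtration.natural Z hZ
  set S := randomWalk c Z
  have hZ2 : ∀ j, MemLp (Z j) 2 μ := fun j =>
    memLp_of_ae_eq_one_or_neg_one (hZ j).aestronglyMeasurable (hval j) 2
  have hS2 : ∀ n, MemLp (S n) 2 μ := fun n =>
    (memLp_const c).add (memLp_finsetSum _ fun j _ => hZ2 j)
  have hS : StronglyAdapted ℱ S := stronglyAdapted_randomWalk hZ c
  have hQ : StronglyAdapted ℱ (fun n ω => S n ω ^ 2 - n) := fun n =>
    ((hS n).pow 2).sub stronglyMeasurable_const
  have hQ_int : ∀ n, Integrable (fun ω => S n ω ^ 2 - n) μ := fun n =>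
    (hS2 n).integrable_sq.sub (integrable_const _)
  refine martingale_nat hQ hQ_int fun n => ?_
  have h2S : StronglyMeasurable[ℱ n] (2 * S n) := (hS n).const_mul 2
  have hcross : Integrable ((2 * S n) * Z (n + 1)) μ :=
    ((hS2 n).const_mul 2).integrable_mul (hZ2 (n + 1))
  have hsucc : (fun ω => S (n + 1) ω ^ 2 - (n + 1 : ℕ)) =ᵐ[μ]
      (fun ω => S n ω ^ 2 - n) + (2 * S n) * Z (n + 1) := by
    filter_upwards [hval (n + 1)] with ω hω
    have hsq : Z (n + 1) ω ^ 2 = 1 := by rcases hω with h | h <;> simp [h]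
    simp only [S, randomWalk_succ, Pi.add_apply, Pi.mul_apply, Pi.ofNat_apply]
    push_cast
    linear_combination hsq
  filter_upwards [condExp_congr_ae (m := ℱ n) hsucc, condExp_add (hQ_int n) hcross (ℱ n),
    condExp_mul_of_stronglyMeasurable_left h2S hcross
      ((hZ2 (n + 1)).integrable one_le_two),
    condExp_natural_succ_eq_zero hZ hindep hmean n] with ω h1 h2 h3 h4
  rw [h1, h2, Pi.add_apply, h3, Pi.mul_apply, h4,
    condExp_of_stronglyMeasurable (ℱ.le n) (hQ n) (hQ_int n)]
  simp

lemma martingale_randomWalk_mul_sub_add (b c : ℝ) :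
    Martingale (fun n ω => randomWalk c Z n ω * (b - randomWalk c Z n ω) + n)
      (Filtration.natural Z hZ) μ := by
  have hint i :=
    (memLp_of_ae_eq_one_or_neg_one (hZ i).aestronglyMeasurable (hval i) 1).integrable le_rfl
  convert ((martingale_randomWalk hZ hindep hmean hint c).smul b).sub
    (martingale_randomWalk_sq_sub hZ hindep hmean hval c) using 1
  ext n ω
  simp only [Pi.sub_apply, Pi.smul_apply, smul_eq_mul]
  ring

lemma ae_exists_randomWalk_mem {a b : ℤ} (ha : 0 ≤ a) (hab : a ≤ b) :
    ∀ᵐ ω ∂μ, ∃ j, randomWalk a Z j ω ∈ ({0, (b : ℝ)} : Set ℝ) := by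
  set W := randomWalk (a : ℝ) Z
  set s : Set ℝ := {0, (b : ℝ)}
  have hu : Adapted _ W := (stronglyAdapted_randomWalk hZ a).adapted
  have hs : MeasurableSet s := (measurableSet_singleton _).insert _
  have hM := martingale_randomWalk_sq_sub hZ hindep hmean hval a
  have hσ : ∀ n, Integrable (fun ω => ((hittingBtwn W s 0 n ω : ℕ) : ℝ)) μ :=
    integrable_apply_hittingBtwn (fun k => integrable_const (μ := μ) (k : ℝ)) hu hs
  refine ae_exists_mem_of_integral_hittingBtwn_le hσ (C := b ^ 2) fun n => ?_
  set σ := hittingBtwn W s 0 n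
  have hQ : Integrable (fun ω => W (σ ω) ω ^ 2 - σ ω) μ :=
    integrable_apply_hittingBtwn hM.integrable hu hs n
  have hE : ∫ ω, (W (σ ω) ω ^ 2 - σ ω) ∂μ = a ^ 2 := by
    simpa [W] using hM.integral_hittingBtwn_eq hu hs n
  have hle : ∫ ω, (W (σ ω) ω ^ 2 - σ ω + σ ω) ∂μ ≤ b ^ 2 := by
    refine (integral_mono_ae (hQ.add (hσ n)) (integrable_const ((b : ℝ) ^ 2)) ?_).trans_eq
      (by simp)
    filter_upwards [ae_randomWalk_hittingBtwn_mem_Icc hval ha hab] with ω hω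
    obtain ⟨h0, hb⟩ := hω n
    simp only [Pi.add_apply]
    nlinarith
  rw [integral_add hQ (hσ n), hE] at hle
  nlinarith

end RandomWalk

end

theorem gamblers_ruin_expected_duration
    {Ω : Type*} {m0 : MeasurableSpace Ω} {μ : Measure Ω} [IsProbabilityMeasure μ]
    (Z : ℕ → Ω → ℝ) (X : ℕ → Ω → ℝ) (a b : ℤ) (τ : Ω → ℕ)
    (ha : 0 < a) (hab : a < b)
    (hZmeas : ∀ i, Measurable (Z i))
    (hindep : iIndepFun Z μ)
    (hval : ∀ i, ∀ᵐ ω ∂μ, Z i ω = 1 ∨ Z i ω = -1)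
    (hp1 : ∀ i, μ {ω | Z i ω = 1} = 1/2)
    (hpm1 : ∀ i, μ {ω | Z i ω = -1} = 1/2)
    (hX : ∀ i, X i = fun ω => (a : ℝ) + ∑ j ∈ Finset.Icc 1 i, Z j ω)
    (hτ : ∀ ω, τ ω = sInf {i | X i ω = 0 ∨ X i ω = (b : ℝ)})
    (hτint : ∫⁻ ω, (τ ω : ENNReal) ∂μ < ⊤) :
    ∫ ω, (τ ω : ℝ) ∂μ = (a : ℝ) * ((b : ℝ) - (a : ℝ)) := by
  obtain rfl : X = randomWalk a Z := funext hX
  obtain rfl : τ = fun ω => sInf {i | randomWalk a Z i ω ∈ ({0, (b : ℝ)} : Set ℝ)} := funext hτ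
  set S := randomWalk (a : ℝ) Z
  set s : Set ℝ := {0, (b : ℝ)}
  have hZ i := (hZmeas i).stronglyMeasurable
  have hmean i := integral_eq_zero_of_fair_sign (hZmeas i) (hval i) (hp1 i) (hpm1 i)
  have hu : Adapted _ S := (stronglyAdapted_randomWalk hZ a).adapted
  have hs : MeasurableSet s := (measurableSet_singleton _).insert _
  have hhit := ae_exists_randomWalk_mem hZ hindep hmean hval ha.le hab.le
  have hM := martingale_randomWalk_mul_sub_add hZ hindep hmean hval b a
  have hbound : ∀ n, ∀ᵐ ω ∂μ, ‖S (hittingBtwn S s 0 n ω) ω * (b - S (hittingBtwn S s 0 n ω) ω)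
      + hittingBtwn S s 0 n ω‖ ≤ b ^ 2 + sInf {i | S i ω ∈ s} := fun n => by
    filter_upwards [ae_randomWalk_hittingBtwn_mem_Icc hval ha.le hab.le, hhit] with ω hS hω
    exact norm_mul_sub_add_le (hS n) (Nat.cast_nonneg _) (mod_cast hittingBtwn_zero_le_sInf hω)
  have hτ_int := integrable_sInf_of_lintegral_lt_top hu hs hhit hτint
  calc ∫ ω, ((sInf {i | S i ω ∈ s} : ℕ) : ℝ) ∂μ
      = ∫ ω, S (sInf {i | S i ω ∈ s}) ω * (b - S (sInf {i | S i ω ∈ s}) ω)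
          + sInf {i | S i ω ∈ s} ∂μ := by
        refine integral_congr_ae ?_
        filter_upwards [hhit] with ω hω
        obtain h | h : S (sInf {i | S i ω ∈ s}) ω = 0 ∨ S (sInf {i | S i ω ∈ s}) ω = b :=
          Nat.sInf_mem hω
        all_goals simp [h]
    _ = a * (b - a) := by
        rw [hM.integral_sInf_eq hu hs hhit ((integrable_const _).add hτ_int) hbound]
        simp
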